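/- In the first-order language with one binary relation symbol E and two unary predicate symbols p and q, there is no sentence φ such that for every finite structure G: G satisfies φ if and only if every element u of G has at least as many E-successors satisfying p as E-successors satisfying q (i.e., |{v : E(u,v) and p(v)}| ≥ |{v : E(u,v) and q(v)}| for all u). -/

import Mathlib

/-
An Ehrenfeucht–Fraïssé argument. In the star with `a` leaves labelled `p`, `b` leaves labelled
`q` and an `E`-edge from the hub to each leaf, only the hub has successors: `a` of them satisfy
`p` and `b` satisfy `q`. So `φ` would hold in the star with `n` and `n` leaves but not in the one
with `n` and `n + 1`. Yet these satisfy the same sentences of quantifier depth at most `n`: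
Duplicator keeps the pebbled tuples with the same labels and the same equality pattern,
answering a new leaf by a new leaf of the same label, of which one is left as long as fewer
than `n` pebbles are down.
-/

open scoped Classical

open FirstOrder FirstOrder.Language

def sigLang : FirstOrder.Language where
  Functions := fun _ => Empty
  Relations := fun n =>
    match n with
    | 1 => Fin 2
    | 2 => Unit
    | _ => Empty

def pSym : sigLang.Relations 1 := (0 : Fin 2)

def qSym : sigLang.Relations 1 := (1 : Fin 2)

def eSym : sigLang.Relations 2 := Unit.unit

namespace FirstOrder.Language.BoundedFormula

variable {L : Language} {α : Type*}

def quantifierDepth : ∀ {n}, L.BoundedFormula α n → ℕ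
  | _, falsum => 0
  | _, equal _ _ => 0
  | _, rel _ _ => 0
  | _, imp f g => max f.quantifierDepth g.quantifierDepth
  | _, all f => f.quantifierDepth + 1

end FirstOrder.Language.BoundedFormula

theorem exists_apply_notMem_range_of_lt {β : Type*} {m n : ℕ} {g : Fin n → β}
    (hg : Function.Injective g) (t : Fin m → β) (h : m < n) : ∃ k, g k ∉ Set.range t := by
  by_contra! hsub
  have hle := Set.ncard_le_ncard (Set.range_subset_iff.2 hsub)
  rw [Set.ncard_range_of_injective hg, ← Set.image_univ] at hle
  have := hle.trans Set.ncard_image_le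
  rw [Set.ncard_univ, Nat.card_fin, Nat.card_fin] at this
  omega

theorem sigLang_term_eq_var {m : ℕ} (t : sigLang.Term (Empty ⊕ Fin m)) :
    ∃ i, t = Term.var (Sum.inr i) := by
  rcases t with ((e | i) | ⟨f, _⟩)
  · exact e.elim
  · exact ⟨i, rfl⟩
  · exact f.elim

theorem pSym_ne_qSym : pSym ≠ qSym :=
  show (0 : Fin 2) ≠ 1 by decide

-- `none` is the hub, `some (.inl i)` a `p`-leaf and `some (.inr j)` a `q`-leaf.
abbrev ColoredStar (a b : ℕ) : Type := Option (Fin a ⊕ Fin b)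

namespace ColoredStar

variable {a b a' b' m : ℕ}

def kind : ColoredStar a b → Option (sigLang.Relations 1) :=
  Option.map (Sum.elim (fun _ => pSym) (fun _ => qSym))

def relMapOfKinds :
    ∀ {n}, sigLang.Relations n → (Fin n → Option (sigLang.Relations 1)) → Prop
  | 1, R, c => c 0 = some R
  | 2, _, c => c 0 = none ∧ c 1 ≠ none
  | 0, R, _ => R.elim
  | _ + 3, R, _ => R.elim

instance : sigLang.Structure (ColoredStar a b) where
  funMap f := Empty.elim f
  RelMap R x := relMapOfKinds R (kind ∘ x)

@[simp]
theorem kind_eq_none {v : ColoredStar a b} : kind v = none ↔ v = none :=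
  Option.map_eq_none_iff

@[simp]
theorem relMap_unary (R : sigLang.Relations 1) (x : Fin 1 → ColoredStar a b) :
    Structure.RelMap R x ↔ kind (x 0) = some R :=
  Iff.rfl

@[simp]
theorem relMap_eSym (x : Fin 2 → ColoredStar a b) :
    Structure.RelMap eSym x ↔ x 0 = none ∧ x 1 ≠ none :=
  and_congr kind_eq_none (not_congr kind_eq_none)

def Similar (s : Fin m → ColoredStar a b) (t : Fin m → ColoredStar a' b') : Prop :=
  kind ∘ s = kind ∘ t ∧ ∀ i j, s i = s j ↔ t i = t j

variable {s : Fin m → ColoredStar a b} {t : Fin m → ColoredStar a' b'}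

theorem Similar.symm (h : Similar s t) : Similar t s :=
  ⟨h.1.symm, fun i j => (h.2 i j).symm⟩

theorem Similar.snoc (h : Similar s t) {x : ColoredStar a b} {y : ColoredStar a' b'}
    (hxy : kind x = kind y) (hx : ∀ i, s i = x ↔ t i = y) :
    Similar (Fin.snoc s x : Fin (m + 1) → _) (Fin.snoc t y : Fin (m + 1) → _) := by
  refine ⟨by rw [Fin.comp_snoc, Fin.comp_snoc, h.1, hxy], ?_⟩
  simp only [Fin.forall_fin_succ', Fin.snoc_castSucc, Fin.snoc_last]
  exact ⟨fun i => ⟨h.2 i, hx i⟩, fun j => by rw [eq_comm, hx j, eq_comm], by simp⟩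

theorem Similar.exists_snoc (h : Similar s t) (ha' : m < a') (hb' : m < b') (x : ColoredStar a b) :
    ∃ y, Similar (Fin.snoc s x : Fin (m + 1) → _) (Fin.snoc t y : Fin (m + 1) → _) := by
  by_cases hx : x ∈ Set.range s
  · obtain ⟨i, rfl⟩ := hx
    exact ⟨t i, h.snoc (congrFun h.1 i) fun j => h.2 j i⟩
  suffices ∃ y, kind x = kind y ∧ y ∉ Set.range t from
    let ⟨y, hxy, hy⟩ := this
    ⟨y, h.snoc hxy fun i => iff_of_false (fun hi => hx ⟨i, hi⟩) fun hi => hy ⟨i, hi⟩⟩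
  rcases x with _ | k | k
  · refine ⟨none, rfl, fun ⟨i, hi⟩ => hx ⟨i, ?_⟩⟩
    rw [← kind_eq_none]
    exact (congrFun h.1 i).trans (kind_eq_none.2 hi)
  · obtain ⟨k', hk'⟩ := exists_apply_notMem_range_of_lt
      (fun _ _ hk => Sum.inl_injective (Option.some_injective _ hk)) t ha'
    exact ⟨_, rfl, hk'⟩
  · obtain ⟨k', hk'⟩ := exists_apply_notMem_range_of_lt
      (fun _ _ hk => Sum.inr_injective (Option.some_injective _ hk)) t hb'
    exact ⟨_, rfl, hk'⟩

theorem realize_iff_of_similar {v : Empty → ColoredStar a b} {v' : Empty → ColoredStar a' b'}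
    (φ : sigLang.BoundedFormula Empty m) (h : Similar s t)
    (hab : m + φ.quantifierDepth ≤ min a b) (hab' : m + φ.quantifierDepth ≤ min a' b') :
    φ.Realize v s ↔ φ.Realize v' t := by
  induction φ with
  | falsum => exact Iff.rfl
  | equal t₁ t₂ =>
    obtain ⟨i, rfl⟩ := sigLang_term_eq_var t₁
    obtain ⟨j, rfl⟩ := sigLang_term_eq_var t₂
    exact h.2 i j
  | rel R ts =>
    have hkinds : kind ∘ (fun i => (ts i).realize (Sum.elim v s)) =
        kind ∘ (fun i => (ts i).realize (Sum.elim v' t)) := by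
      funext i
      obtain ⟨j, hj⟩ := sigLang_term_eq_var (ts i)
      simpa [hj] using congrFun h.1 j
    exact Iff.of_eq (congrArg (relMapOfKinds R) hkinds)
  | imp f g ihf ihg =>
    simp only [BoundedFormula.quantifierDepth] at hab hab'
    exact imp_congr (ihf h (by omega) (by omega)) (ihg h (by omega) (by omega))
  | all f ih =>
    simp only [BoundedFormula.quantifierDepth] at hab hab'
    refine ⟨fun hs y => ?_, fun ht x => ?_⟩
    · obtain ⟨x, hxy⟩ := h.symm.exists_snoc (by omega) (by omega) y
      exact (ih hxy.symm (by omega) (by omega)).1 (hs x)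
    · obtain ⟨y, hxy⟩ := h.exists_snoc (by omega) (by omega) x
      exact (ih hxy (by omega) (by omega)).2 (ht y)

theorem realize_sentence_iff (φ : sigLang.Sentence)
    (hab : φ.quantifierDepth ≤ min a b) (hab' : φ.quantifierDepth ≤ min a' b') :
    ColoredStar a b ⊨ φ ↔ ColoredStar a' b' ⊨ φ :=
  realize_iff_of_similar φ ⟨Subsingleton.elim _ _, fun i => i.elim0⟩
    (by omega) (by omega)

theorem card_successors (u : ColoredStar a b) (R : sigLang.Relations 1) :
    Nat.card {v // Structure.RelMap eSym ![u, v] ∧ Structure.RelMap R ![v]} =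
      if u = none then Nat.card {v : ColoredStar a b // kind v = some R} else 0 := by
  split_ifs with hu
  · subst hu
    refine Nat.card_congr (Equiv.subtypeEquivRight fun v => ?_)
    simp only [relMap_eSym, relMap_unary, Matrix.cons_val_zero, Matrix.cons_val_one,
      true_and, and_iff_right_iff_imp]
    rintro hv rfl
    simp [kind] at hv
  · simp [hu]

theorem card_kind_pSym : Nat.card {v : ColoredStar a b // kind v = some pSym} = a := by
  have hleaves : {v : ColoredStar a b | kind v = some pSym} = Set.range (some ∘ Sum.inl) := by
    ext (_ | i | i) <;> simp [kind, pSym_ne_qSym.symm]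
  rw [← Set.coe_ofPred, Nat.card_coe_set_eq, hleaves,
    Set.ncard_range_of_injective (Option.some_injective _ |>.comp Sum.inl_injective),
    Nat.card_fin]

theorem card_kind_qSym : Nat.card {v : ColoredStar a b // kind v = some qSym} = b := by
  have hleaves : {v : ColoredStar a b | kind v = some qSym} = Set.range (some ∘ Sum.inr) := by
    ext (_ | i | i) <;> simp [kind, pSym_ne_qSym]
  rw [← Set.coe_ofPred, Nat.card_coe_set_eq, hleaves,
    Set.ncard_range_of_injective (Option.some_injective _ |>.comp Sum.inr_injective),
    Nat.card_fin]

end ColoredStar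

/-- In the first-order language with one binary relation `E` and unary predicates
`p`, `q`, no sentence expresses, over finite structures, that every element has at
least as many `E`-successors satisfying `p` as `E`-successors satisfying `q`. -/
theorem no_FO_sentence_for_count_comparison :
    ¬ ∃ φ : sigLang.Sentence,
      ∀ (M : Type) [Fintype M] [sigLang.Structure M],
        (M ⊨ φ ↔
          ∀ u : M,
            Nat.card {v : M // Structure.RelMap eSym ![u, v] ∧ Structure.RelMap pSym ![v]} ≥
            Nat.card {v : M // Structure.RelMap eSym ![u, v] ∧ Structure.RelMap qSym ![v]}) := by
  rintro ⟨φ, hφ⟩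
  set n := φ.quantifierDepth
  have hbalanced : ColoredStar n n ⊨ φ := by
    refine (hφ _).2 fun u => ?_
    simp only [ColoredStar.card_successors, ColoredStar.card_kind_pSym,
      ColoredStar.card_kind_qSym, le_refl]
  have hunbalanced : ColoredStar n (n + 1) ⊨ φ :=
    (ColoredStar.realize_sentence_iff φ (by omega) (by omega)).1 hbalanced
  have hhub := (hφ _).1 hunbalanced none
  simp only [ColoredStar.card_successors, ColoredStar.card_kind_pSym,
    ColoredStar.card_kind_qSym, if_true] at hhub
  omega
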